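/- arXiv:2603.10812 — 2 statements merged into one kernel-verified Lean document; each statement's English description precedes it below -/
import Mathlib

section
/- Let A, Q, D, P* be n×n real matrices such that P* is symmetric positive definite, D is positive semidefinite, Q is symmetric, Aᵀ P* + P* A + Q − P* D P* = 0, and let σ > 0 be such that Q − σ P* is positive semidefinite. Let P : ℝ → Matrix (Fin n) (Fin n) ℝ be such that for every t ≥ 0, P(t) is symmetric positive semidefinite and P has derivative Aᵀ P(t) + P(t) A + Q − P(t) D P(t) at t (HasDerivAt). Define V(t) := tr(P*⁻¹ (P(t) − P*) P*⁻¹ (P(t) − P*)). Then V(t) ≤ exp(−2σt) · V(0) for every t ≥ 0. -/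
open Matrix
open scoped Matrix.Norms.L2Operator

/-!
Write `C = P*⁻¹` and `E = P - P*`. Subtracting the algebraic Riccati equation from the
differential one and using cyclicity of the trace gives
`tr (C Ṗ C E) = - tr (C E D E C · P) - tr (C Q C · E C E)`.
The matrices `C E D E C`, `E C E` and `P(t)` are positive semidefinite and `C Q C ⪰ σ C`,
so `V' = 2 tr (C Ṗ C E) ≤ -2σ V`, and Grönwall's inequality gives the decay.
-/

open scoped ComplexOrder MatrixOrder in
theorem Matrix.PosSemidef.trace_mul_nonneg {m 𝕜 : Type*} [Fintype m] [RCLike 𝕜]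
    {A B : Matrix m m 𝕜} (hA : A.PosSemidef) (hB : B.PosSemidef) : 0 ≤ (A * B).trace := by
  classical
  have hS : (CFC.sqrt A)ᴴ = CFC.sqrt A := (CFC.sqrt_nonneg A).posSemidef.isHermitian.eq
  rw [← CFC.sqrt_mul_sqrt_self A hA.nonneg]
  nth_rw 1 [← hS]
  rw [mul_assoc, trace_mul_comm]
  exact (hB.mul_mul_conjTranspose_same (CFC.sqrt A)).trace_nonneg

section Derivatives

variable {m 𝕜 : Type*} [Fintype m] [DecidableEq m] [RCLike 𝕜]
  {M : 𝕜 → Matrix m m 𝕜} {M' : Matrix m m 𝕜} {t : 𝕜}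

theorem HasDerivAt.matrix_trace (hM : HasDerivAt M M' t) :
    HasDerivAt (fun s => (M s).trace) M'.trace t :=
  (traceLinearMap m 𝕜 𝕜).toContinuousLinearMap.hasFDerivAt.comp_hasDerivAt t hM

theorem HasDerivAt.trace_mul_mul_mul_self (C : Matrix m m 𝕜) (hM : HasDerivAt M M' t) :
    HasDerivAt (fun s => (C * M s * C * M s).trace) (2 * (C * M' * C * M t).trace) t := by
  have hprod : HasDerivAt (fun s => C * M s * C * M s) (C * M' * C * M t + C * M t * C * M') t :=
    ((hM.const_mul C).mul_const C).mul hM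
  have hcyc : (C * M t * C * M').trace = (C * M' * C * M t).trace := by
    rw [mul_assoc (C * M t), trace_mul_comm, ← mul_assoc]
  simpa only [trace_add, hcyc, two_mul] using hprod.matrix_trace

end Derivatives

theorem le_exp_mul_of_hasDerivAt_le_mul {f f' : ℝ → ℝ} {K : ℝ}
    (hf : ∀ t, 0 ≤ t → HasDerivAt f (f' t) t) (hbound : ∀ t, 0 ≤ t → f' t ≤ K * f t)
    {t : ℝ} (ht : 0 ≤ t) : f t ≤ Real.exp (K * t) * f 0 := by
  have hgronwall := le_gronwallBound_of_liminf_deriv_right_le (f := f) (f' := f') (δ := f 0)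
    (K := K) (ε := 0) (a := 0) (b := t)
    (fun x hx => (hf x hx.1).continuousAt.continuousWithinAt)
    (fun x hx _ hr => (hf x hx.1).hasDerivWithinAt.liminf_right_slope_le hr) le_rfl
    (fun x hx => by simpa using hbound x hx.1) t ⟨ht, le_rfl⟩
  rwa [sub_zero, gronwallBound_ε0, mul_comm] at hgronwall

def riccati {m R : Type*} [Fintype m] [CommRing R] (A Q D P : Matrix m m R) : Matrix m m R :=
  Aᵀ * P + P * A + Q - P * D * P

section Riccati

variable {m R : Type*} [Fintype m] [DecidableEq m] [CommRing R] {A Q D Pstar C : Matrix m m R}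

theorem mul_transpose_add_mul_eq_of_riccati_eq_zero (hCP : C * Pstar = 1) (hPC : Pstar * C = 1)
    (hARE : riccati A Q D Pstar = 0) : C * Aᵀ + A * C = D - C * Q * C :=
  calc C * Aᵀ + A * C = C * Aᵀ * (Pstar * C) + (C * Pstar) * A * C := by
        rw [hPC, hCP, mul_one, one_mul]
    _ = C * riccati A Q D Pstar * C - C * Q * C + (C * Pstar) * D * (Pstar * C) := by
        rw [riccati]; noncomm_ring
    _ = D - C * Q * C := by rw [hARE, hCP, hPC]; noncomm_ring

theorem trace_riccati_mul_sub_eq (hCP : C * Pstar = 1) (hPC : Pstar * C = 1)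
    (hARE : riccati A Q D Pstar = 0) (P : Matrix m m R) :
    (C * riccati A Q D P * C * (P - Pstar)).trace =
      -(C * (P - Pstar) * D * (P - Pstar) * C * P).trace -
        (C * Q * C * ((P - Pstar) * C * (P - Pstar))).trace := by
  set E := P - Pstar
  have hP : P = Pstar + E := by simp [E]
  have hfield : riccati A Q D P =
      riccati A Q D Pstar + Aᵀ * E + E * A - (Pstar * D * E + E * D * Pstar + E * D * E) := by
    rw [riccati, riccati, hP]; noncomm_ring
  have hexpand : C * riccati A Q D P * C * E =
      (C * Aᵀ) * (E * C * E) + (C * E) * (A * C * E) - (C * Pstar) * D * (E * C * E)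
        - (C * E * D) * ((Pstar * C) * E) - C * E * D * E * C * E := by
    rw [hfield, hARE]; noncomm_ring
  have hcycA : ((C * E) * (A * C * E)).trace = (A * C * (E * C * E)).trace := by
    rw [trace_mul_comm]; congr 1; noncomm_ring
  have hcycD : (C * E * D * E).trace = (D * (E * C * E)).trace := by
    rw [trace_mul_cycle, trace_mul_cycle]; congr 1; noncomm_ring
  have hsplitP : (C * E * D * E * C * P).trace =
      (C * E * D * E * C * E).trace + (D * (E * C * E)).trace := by
    rw [hP, mul_add, trace_add, mul_assoc _ C Pstar, hCP, mul_one, hcycD, add_comm]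
  have hsum : (C * Aᵀ * (E * C * E)).trace + (A * C * (E * C * E)).trace =
      (D * (E * C * E)).trace - (C * Q * C * (E * C * E)).trace := by
    rw [← trace_add, ← add_mul, mul_transpose_add_mul_eq_of_riccati_eq_zero hCP hPC hARE,
      sub_mul, trace_sub]
  rw [hexpand, hPC, hCP, one_mul, one_mul]
  simp only [trace_sub, trace_add]
  rw [hcycA, hcycD, hsplitP]
  linear_combination hsum

end Riccati

theorem trace_riccati_mul_sub_le {m : Type*} [Fintype m] [DecidableEq m]
    {A Q D Pstar P : Matrix m m ℝ} (hPstar : Pstar.PosDef) (hD : D.PosSemidef)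
    (hARE : riccati A Q D Pstar = 0) {σ : ℝ} (hQσ : (Q - σ • Pstar).PosSemidef)
    (hP : P.PosSemidef) :
    (Pstar⁻¹ * riccati A Q D P * Pstar⁻¹ * (P - Pstar)).trace ≤
      -σ * (Pstar⁻¹ * (P - Pstar) * Pstar⁻¹ * (P - Pstar)).trace := by
  have hdet : IsUnit Pstar.det := hPstar.det_pos.ne'.isUnit
  have hCP : Pstar⁻¹ * Pstar = 1 := nonsing_inv_mul Pstar hdet
  have hPC : Pstar * Pstar⁻¹ = 1 := mul_nonsing_inv Pstar hdet
  rw [trace_riccati_mul_sub_eq hCP hPC hARE P]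
  set C := Pstar⁻¹
  set E := P - Pstar
  have hCH : Cᴴ = C := hPstar.inv.isHermitian.eq
  have hEH : Eᴴ = E := (hP.isHermitian.sub hPstar.isHermitian).eq
  have hQsplit : C * Q * C = C * (Q - σ • Pstar) * C + σ • C := by
    rw [mul_sub, sub_mul, Matrix.mul_smul, Matrix.smul_mul, hCP, one_mul, sub_add_cancel]
  have hQσC : 0 ≤ (C * (Q - σ • Pstar) * C * (E * C * E)).trace := by
    refine PosSemidef.trace_mul_nonneg ?_ ?_
    · simpa only [hCH] using hQσ.mul_mul_conjTranspose_same C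
    · simpa only [hEH] using hPstar.inv.posSemidef.conjTranspose_mul_mul_same E
  have hDP : 0 ≤ (C * E * D * E * C * P).trace := by
    refine PosSemidef.trace_mul_nonneg ?_ hP
    simpa only [conjTranspose_mul, hCH, hEH, ← mul_assoc] using
      hD.conjTranspose_mul_mul_same (E * C)
  rw [hQsplit, add_mul, trace_add, smul_mul, trace_smul, smul_eq_mul]
  simp only [mul_assoc] at hQσC hDP ⊢
  linarith

theorem riccati_lyapunov_exponential_decay_general {n : ℕ}
    (A Q D Pstar : Matrix (Fin n) (Fin n) ℝ)
    (hPstar : Pstar.PosDef) (hD : D.PosSemidef)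
    (hARE : Aᵀ * Pstar + Pstar * A + Q - Pstar * D * Pstar = 0)
    (σ : ℝ) (hQσ : (Q - σ • Pstar).PosSemidef)
    (P : ℝ → Matrix (Fin n) (Fin n) ℝ)
    (hPsd : ∀ t : ℝ, 0 ≤ t → (P t).PosSemidef)
    (hP : ∀ t : ℝ, 0 ≤ t →
      HasDerivAt P (Aᵀ * P t + P t * A + Q - P t * D * P t) t) :
    ∀ t : ℝ, 0 ≤ t →
      (Pstar⁻¹ * (P t - Pstar) * Pstar⁻¹ * (P t - Pstar)).trace ≤
        Real.exp (-2 * σ * t) *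
          (Pstar⁻¹ * (P 0 - Pstar) * Pstar⁻¹ * (P 0 - Pstar)).trace := by
  intro t ht
  refine le_exp_mul_of_hasDerivAt_le_mul
    (f := fun s => (Pstar⁻¹ * (P s - Pstar) * Pstar⁻¹ * (P s - Pstar)).trace)
    (fun s hs => ((hP s hs).sub_const Pstar).trace_mul_mul_mul_self Pstar⁻¹) (fun s hs => ?_) ht
  have hdecay := trace_riccati_mul_sub_le hPstar hD hARE hQσ (hPsd s hs)
  rw [riccati] at hdecay
  linarith

/-- Exponential decay of the Lyapunov function along trajectories of the differential
Riccati equation that remain in the positive semidefinite cone: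
`V(t) ≤ exp(−2σt) V(0)` for all `t ≥ 0`. -/
theorem riccati_lyapunov_exponential_decay {n : ℕ}
    (A Q D Pstar : Matrix (Fin n) (Fin n) ℝ)
    (hPstar : Pstar.PosDef) (hD : D.PosSemidef) (hQ : Q.IsSymm)
    (hARE : Aᵀ * Pstar + Pstar * A + Q - Pstar * D * Pstar = 0)
    (σ : ℝ) (hσ : 0 < σ) (hQσ : (Q - σ • Pstar).PosSemidef)
    (P : ℝ → Matrix (Fin n) (Fin n) ℝ)
    (hPsd : ∀ t : ℝ, 0 ≤ t → (P t).PosSemidef)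
    (hP : ∀ t : ℝ, 0 ≤ t →
      HasDerivAt P (Aᵀ * P t + P t * A + Q - P t * D * P t) t) :
    ∀ t : ℝ, 0 ≤ t →
      (Pstar⁻¹ * (P t - Pstar) * Pstar⁻¹ * (P t - Pstar)).trace ≤
        Real.exp (-2 * σ * t) *
          (Pstar⁻¹ * (P 0 - Pstar) * Pstar⁻¹ * (P 0 - Pstar)).trace :=
  riccati_lyapunov_exponential_decay_general A Q D Pstar hPstar hD hARE σ hQσ P hPsd hP
end

section
/- Let A_cl be an n×n real matrix, K an m×n real matrix, and let Q, R, P₀, W₀ be real matrices (Q, P₀, W₀ of size n×n, R of size m×m) such that: A_clᵀ P₀ + P₀ A_cl + Q + Kᵀ R K = 0; A_cl W₀ + W₀ A_clᵀ + I_n = 0; W₀ is positive semidefinite; Q − q·I_n is positive semidefinite for some real q > 0; and R − r·I_m is positive semidefinite for some real r > 0. Then the L2 operator norm of K W₀ satisfies ‖K W₀‖ ≤ tr(P₀)/√(q·r). -/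
open Matrix
open scoped Matrix.Norms.L2Operator
open scoped MatrixOrder ComplexOrder

/-!
Pairing the two Lyapunov equations gives
`tr P₀ = tr (Q W₀) + tr (R K W₀ Kᵀ) ≥ q tr W₀ + r tr (K W₀ Kᵀ)`.
Writing `W₀ = S²` with `S = W₀^{1/2}`, we have `‖K W₀‖ ≤ ‖K S‖ ‖S‖`, and since the operator norm is
dominated by the Frobenius norm, `‖K W₀‖² ≤ tr W₀ · tr (K W₀ Kᵀ) ≤ (tr P₀)² / (q r)`.
-/

namespace Matrix

variable {ι : Type*} [Fintype ι]

theorem trace_mul_eq_of_lyapunov {R : Type*} [CommRing R] {A P W M N : Matrix ι ι R}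
    (hP : Aᵀ * P + P * A + M = 0) (hW : A * W + W * Aᵀ + N = 0) :
    (P * N).trace = (M * W).trace := by
  rw [eq_neg_of_add_eq_zero_right hP, eq_neg_of_add_eq_zero_right hW]
  simp only [mul_neg, neg_mul, mul_add, add_mul, trace_neg, trace_add, mul_assoc]
  rw [trace_mul_comm Aᵀ, mul_assoc]
  ring

variable [DecidableEq ι]

section RCLike

variable {𝕜 : Type*} [RCLike 𝕜] {A B : Matrix ι ι 𝕜}

theorem PosSemidef.trace_mul_nonneg_s12 (hA : A.PosSemidef) (hB : B.PosSemidef) :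
    0 ≤ (A * B).trace := by
  have hS : (CFC.sqrt A)ᴴ = CFC.sqrt A := (CFC.sqrt_nonneg A).posSemidef.isHermitian.eq
  have h := hB.mul_mul_conjTranspose_same (CFC.sqrt A)
  rw [hS] at h
  calc 0 ≤ (CFC.sqrt A * B * CFC.sqrt A).trace := h.trace_nonneg
    _ = (A * B).trace := by
      rw [trace_mul_comm, ← mul_assoc, CFC.sqrt_mul_sqrt_self A hA.nonneg]

theorem PosSemidef.mul_trace_le_trace_mul {c : 𝕜} (hA : (A - c • 1).PosSemidef)
    (hB : B.PosSemidef) : c * B.trace ≤ (A * B).trace := by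
  have h := hA.trace_mul_nonneg_s12 hB
  rwa [sub_mul, smul_mul, one_mul, trace_sub, trace_smul, smul_eq_mul, sub_nonneg] at h

end RCLike

theorem l2_opNorm_sq_le_trace_transpose_mul_self {m : Type*} [Fintype m]
    (M : Matrix m ι ℝ) : ‖M‖ ^ 2 ≤ (Mᵀ * M).trace := by
  have htr : (Mᵀ * M).trace = ∑ i, ∑ j, M i j ^ 2 := by
    simp only [trace, diag, mul_apply, transpose_apply, sq]
    exact Finset.sum_comm
  have htr_nonneg : 0 ≤ (Mᵀ * M).trace := htr ▸ by positivity
  have h : ‖M‖ ≤ √(Mᵀ * M).trace := by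
    rw [l2_opNorm_def]
    refine ContinuousLinearMap.opNorm_le_bound _ (Real.sqrt_nonneg _) fun x => ?_
    rw [EuclideanSpace.norm_eq, EuclideanSpace.norm_eq, ← Real.sqrt_mul htr_nonneg]
    refine Real.sqrt_le_sqrt ?_
    simp only [LinearEquiv.trans_apply, LinearMap.coe_toContinuousLinearMap', ofLp_toLpLin,
      toLin'_apply, mulVec, dotProduct, Real.norm_eq_abs, sq_abs]
    rw [htr, Finset.sum_mul]
    exact Finset.sum_le_sum fun i _ => Finset.sum_mul_sq_le_sq_mul_sq _ _ _
  calc ‖M‖ ^ 2 ≤ √(Mᵀ * M).trace ^ 2 := pow_le_pow_left₀ (norm_nonneg _) h 2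
    _ = (Mᵀ * M).trace := Real.sq_sqrt htr_nonneg

theorem PosSemidef.l2_opNorm_mul_sq_le {m : Type*} [Fintype m] {W : Matrix ι ι ℝ}
    (hW : W.PosSemidef) (K : Matrix m ι ℝ) :
    ‖K * W‖ ^ 2 ≤ W.trace * (K * W * Kᵀ).trace := by
  set S := CFC.sqrt W
  have hS : Sᵀ = S := (CFC.sqrt_nonneg W).posSemidef.isHermitian.eq
  have hSS : S * S = W := CFC.sqrt_mul_sqrt_self W hW.nonneg
  calc ‖K * W‖ ^ 2 = ‖K * S * S‖ ^ 2 := by rw [Matrix.mul_assoc, hSS]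
    _ ≤ (‖K * S‖ * ‖S‖) ^ 2 := by gcongr; exact l2_opNorm_mul _ _
    _ = ‖S‖ ^ 2 * ‖K * S‖ ^ 2 := by ring
    _ ≤ (Sᵀ * S).trace * ((K * S)ᵀ * (K * S)).trace := by
      gcongr
      · exact (posSemidef_conjTranspose_mul_self S).trace_nonneg
      · exact l2_opNorm_sq_le_trace_transpose_mul_self S
      · exact l2_opNorm_sq_le_trace_transpose_mul_self (K * S)
    _ = W.trace * (K * W * Kᵀ).trace := by
      rw [hS, hSS, trace_mul_comm, transpose_mul, hS, ← Matrix.mul_assoc, Matrix.mul_assoc K,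
        hSS]

end Matrix

theorem le_div_sqrt_mul_of_sq_le_mul {x a b p q r : ℝ} (hx : x ^ 2 ≤ a * b) (ha : 0 ≤ a)
    (hb : 0 ≤ b) (hq : 0 < q) (hr : 0 < r) (h : q * a + r * b ≤ p) :
    x ≤ p / √(q * r) := by
  have hqa : 0 ≤ q * a := by positivity
  have hrb : 0 ≤ r * b := by positivity
  rw [le_div_iff₀ (by positivity)]
  refine abs_le_of_sq_le_sq' ?_ (by linarith) |>.2
  calc (x * √(q * r)) ^ 2 = q * r * x ^ 2 := by rw [mul_pow, Real.sq_sqrt (by positivity)]; ring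
    _ ≤ q * r * (a * b) := by gcongr
    _ = (q * a) * (r * b) := by ring
    _ ≤ (q * a + r * b) ^ 2 := by nlinarith
    _ ≤ p ^ 2 := by gcongr

/-- Bound on `K W₀`: `‖K W₀‖ ≤ tr(P₀)/√(q r)` where `q ≤ σ_min(Q)`, `r ≤ σ_min(R)`. -/
theorem gain_gramian_norm_bound {n m : ℕ}
    (Acl : Matrix (Fin n) (Fin n) ℝ) (K : Matrix (Fin m) (Fin n) ℝ)
    (Q P₀ W₀ : Matrix (Fin n) (Fin n) ℝ) (R : Matrix (Fin m) (Fin m) ℝ)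
    (q r : ℝ) (hq : 0 < q) (hr : 0 < r)
    (hP₀ : Aclᵀ * P₀ + P₀ * Acl + Q + Kᵀ * R * K = 0)
    (hW₀ : Acl * W₀ + W₀ * Aclᵀ + 1 = 0)
    (hW₀psd : W₀.PosSemidef)
    (hQq : (Q - q • (1 : Matrix (Fin n) (Fin n) ℝ)).PosSemidef)
    (hRr : (R - r • (1 : Matrix (Fin m) (Fin m) ℝ)).PosSemidef) :
    ‖K * W₀‖ ≤ P₀.trace / Real.sqrt (q * r) := by
  have hKWK : (K * W₀ * Kᵀ).PosSemidef := by
    simpa only [conjTranspose_eq_transpose_of_trivial] using hW₀psd.mul_mul_conjTranspose_same K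
  have htrace : P₀.trace = (Q * W₀).trace + (R * (K * W₀ * Kᵀ)).trace := by
    have h := trace_mul_eq_of_lyapunov (M := Q + Kᵀ * R * K) (by rwa [← add_assoc]) hW₀
    rwa [mul_one, add_mul, trace_add, Matrix.mul_assoc (Kᵀ * R), Matrix.mul_assoc Kᵀ,
      trace_mul_comm Kᵀ, Matrix.mul_assoc R] at h
  exact le_div_sqrt_mul_of_sq_le_mul (hW₀psd.l2_opNorm_mul_sq_le K) hW₀psd.trace_nonneg
    hKWK.trace_nonneg hq hr
    (htrace ▸ add_le_add (hQq.mul_trace_le_trace_mul hW₀psd) (hRr.mul_trace_le_trace_mul hKWK))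
end
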